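/- arXiv:0910.5396 — 3 statements merged into one kernel-verified Lean document; each statement's English description precedes it below -/
import Mathlib

section
/- Suppose B(X) contains a cycle of length greater than 4, and let g'(B) denote the minimum length of a cycle of B(X) having more than four vertices. Then for each Φ ∈ {Δ(X), Γ(X)}, either the girth of Φ equals 3, or the girth of Φ equals g'(B)/2. -/
open SimpleGraph

/-- The set of primes dividing at least one element of `X`. -/
def rho (X : Set ℕ) : Set ℕ := {p | p.Prime ∧ ∃ x ∈ X, p ∣ x}

/-- `X* = X \ {1}`. -/
def Xstar (X : Set ℕ) : Set ℕ := X \ {1}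

/-- The bipartite divisor graph `B(X)` on the disjoint union `ρ(X) ⊔ X*`:
`p ∈ ρ(X)` and `x ∈ X*` are adjacent iff `p ∣ x`. -/
def BGraph (X : Set ℕ) : SimpleGraph (↥(rho X) ⊕ ↥(Xstar X)) where
  Adj u v :=
    match u, v with
    | Sum.inl p, Sum.inr x => (p : ℕ) ∣ (x : ℕ)
    | Sum.inr x, Sum.inl p => (p : ℕ) ∣ (x : ℕ)
    | _, _ => False
  symm := ⟨by rintro (p | x) (q | y) h <;> exact h⟩
  loopless := ⟨by rintro (p | x) h <;> exact h⟩

/-- The prime vertex graph `Δ(X)` on `ρ(X)`: distinct primes `p, q` are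
adjacent iff `p*q` divides some element of `X`. -/
def DeltaGraph (X : Set ℕ) : SimpleGraph ↥(rho X) where
  Adj p q := p ≠ q ∧ ∃ x ∈ X, (p : ℕ) * (q : ℕ) ∣ x
  symm := ⟨by
    rintro p q ⟨hne, x, hx, hdvd⟩
    exact ⟨hne.symm, x, hx, by rwa [mul_comm]⟩⟩
  loopless := ⟨by rintro p ⟨hne, -⟩; exact hne rfl⟩

/-- The common divisor graph `Γ(X)` on `X*`: distinct `x, y` are adjacent
iff `gcd(x, y) > 1`. -/
def GammaGraph (X : Set ℕ) : SimpleGraph ↥(Xstar X) where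
  Adj x y := x ≠ y ∧ 1 < Nat.gcd (x : ℕ) (y : ℕ)
  symm := ⟨by
    rintro x y ⟨hne, h⟩
    exact ⟨hne.symm, by rwa [Nat.gcd_comm]⟩⟩
  loopless := ⟨by rintro x ⟨hne, -⟩; exact hne rfl⟩

/-!
`Δ(X)` and `Γ(X)` are the two projections of `B(X)`: two vertices on the same side are adjacent
when they have a common neighbour in `B(X)`. The statement holds for both projections of any
bipartite graph given by a relation. A cycle of length `2k > 4` in the bipartite graph projects
to a `k`-cycle, so the girth is at most `g' / 2`. Conversely, choosing a common neighbour for each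
edge of a shortest cycle of the projection lifts it to a cycle of twice its length, unless two edges
share that neighbour; then the neighbour has three distinct neighbours, which form a triangle.
-/

lemma List.nodup_of_filterMap_getLeft?_getRight? {α β : Type*} :
    ∀ {l : List (α ⊕ β)}, (l.filterMap Sum.getLeft?).Nodup →
      (l.filterMap Sum.getRight?).Nodup → l.Nodup
  | [], _, _ => List.nodup_nil
  | .inl a :: l, h₁, h₂ => by
    simp only [List.filterMap_cons, Sum.getLeft?_inl, Sum.getRight?_inl, List.nodup_cons,
      List.mem_filterMap, Sum.getLeft?_eq_some_iff, exists_eq_right] at h₁ h₂ ⊢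
    exact ⟨h₁.1, nodup_of_filterMap_getLeft?_getRight? h₁.2 h₂⟩
  | .inr b :: l, h₁, h₂ => by
    simp only [List.filterMap_cons, Sum.getLeft?_inr, Sum.getRight?_inr, List.nodup_cons,
      List.mem_filterMap, Sum.getRight?_eq_some_iff, exists_eq_right] at h₁ h₂ ⊢
    exact ⟨h₂.1, nodup_of_filterMap_getLeft?_getRight? h₁ h₂.2⟩

namespace SimpleGraph

variable {V : Type*} {G : SimpleGraph V}

lemma Walk.isCycle_of_support_tail_nodup {v : V} (c : G.Walk v v) (hlen : 3 ≤ c.length)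
    (hnd : c.support.tail.Nodup) : c.IsCycle := by
  cases c with
  | nil => simp at hlen
  | cons h p =>
    have hp : p.IsPath := by rw [Walk.isPath_def]; simpa using hnd
    refine (Walk.cons_isCycle_iff p h).mpr ⟨hp, fun he => ?_⟩
    have := hp.length_eq_one_of_mem_edges (Sym2.eq_swap ▸ he)
    simp only [Walk.length_cons] at hlen
    omega

lemma girth_eq_three_of_isNClique {s : Finset V} (hs : G.IsNClique 3 s) : G.girth = 3 := by
  obtain ⟨u, c, hc, hlen⟩ := is3Clique_iff_exists_cycle_length_three.mp ⟨s, hs⟩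
  have := three_le_girth fun hG => hG c hc
  have := girth_le_length hc
  omega

lemma CliqueFree.eq_or_eq_of_isClique (hG : G.CliqueFree 3) {s : Set V} (hs : G.IsClique s)
    {x y z : V} (hx : x ∈ s) (hy : y ∈ s) (hz : z ∈ s) (hxy : x ≠ y) : z = x ∨ z = y := by
  classical
  by_contra! h
  exact hG {x, y, z} <| is3Clique_triple_iff.mpr
    ⟨hs hx hy hxy, hs hx hz h.1.symm, hs hy hz h.2.symm⟩

def longCycleLengths (G : SimpleGraph V) : Set ℕ :=
  {n | ∃ (v : V) (w : G.Walk v v), w.IsCycle ∧ 4 < w.length ∧ w.length = n}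

lemma Iso.longCycleLengths_subset {W : Type*} {H : SimpleGraph W} (e : G ≃g H) :
    longCycleLengths G ⊆ longCycleLengths H := by
  rintro _ ⟨v, c, hc, hlen, rfl⟩
  exact ⟨e v, c.map e.toHom, (Walk.isCycle_map_iff_of_injective e.injective).mpr hc,
    by simpa using hlen, by simp⟩

lemma Iso.longCycleLengths_eq {W : Type*} {H : SimpleGraph W} (e : G ≃g H) :
    longCycleLengths G = longCycleLengths H :=
  e.longCycleLengths_subset.antisymm e.symm.longCycleLengths_subset

section Projection

open Sum

variable {α β : Type*}

def bipartiteOfRel (r : α → β → Prop) : SimpleGraph (α ⊕ β) where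
  Adj u v :=
    match u, v with
    | .inl a, .inr b => r a b
    | .inr b, .inl a => r a b
    | _, _ => False
  symm := ⟨by rintro (a | b) (a' | b') h <;> exact h⟩
  loopless := ⟨by rintro (a | b) h <;> exact h⟩

def leftProjection (r : α → β → Prop) : SimpleGraph α where
  Adj a a' := a ≠ a' ∧ ∃ b, r a b ∧ r a' b
  symm := ⟨fun _ _ ⟨hne, b, ha, ha'⟩ => ⟨hne.symm, b, ha', ha⟩⟩
  loopless := ⟨fun _ h => h.1 rfl⟩

def bipartiteOfRelIsoFlip (r : α → β → Prop) : bipartiteOfRel r ≃g bipartiteOfRel (flip r) where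
  toEquiv := Equiv.sumComm α β
  map_rel_iff' := by rintro (a | b) (a' | b') <;> exact Iff.rfl

variable {r : α → β → Prop}

lemma isClique_leftProjection_setOf_rel (b : β) :
    (leftProjection r).IsClique {a | r a b} :=
  fun _ ha _ ha' hne => ⟨hne, b, ha, ha'⟩

lemma leftProjection_dart_edge_eq_of_rel (hP : (leftProjection r).CliqueFree 3) {b : β}
    {d₁ d₂ : (leftProjection r).Dart} (h₁ : r d₁.fst b) (h₁' : r d₁.snd b) (h₂ : r d₂.fst b)
    (h₂' : r d₂.snd b) : d₁.edge = d₂.edge := by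
  have hs := isClique_leftProjection_setOf_rel (r := r) b
  have hne := d₂.adj.ne
  rcases hP.eq_or_eq_of_isClique hs h₁ h₁' h₂ d₁.adj.ne with h | h <;>
  rcases hP.eq_or_eq_of_isClique hs h₁ h₁' h₂' d₁.adj.ne with h' | h' <;>
  simp_all [Dart.edge, Sym2.eq_swap]

lemma Walk.exists_leftProjection_of_isTrail : ∀ {a a' : α}
    (w : (bipartiteOfRel r).Walk (inl a) (inl a')), w.IsTrail →
      ∃ p : (leftProjection r).Walk a a', 2 * p.length = w.length ∧
        p.support.tail = w.support.tail.filterMap getLeft?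
  | _, _, .nil, _ => ⟨.nil, rfl, rfl⟩
  | _, _, .cons (v := .inl _) h _, _ => h.elim
  | _, _, .cons (v := .inr _) _ (.cons (v := .inr _) h _), _ => h.elim
  | a, _, .cons (v := .inr b) h₁ (.cons (v := .inl a'') h₂ w), hw => by
    obtain ⟨p, hlen, hsupp⟩ := exists_leftProjection_of_isTrail w hw.of_cons.of_cons
    have hne : a ≠ a'' := by
      rintro rfl
      exact ((Walk.isTrail_cons _ _).mp hw).2 (by simp [Sym2.eq_swap])
    have hadj : (leftProjection r).Adj a a'' := ⟨hne, b, h₁, h₂⟩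
    refine ⟨.cons hadj p, by simp only [Walk.length_cons]; omega, ?_⟩
    simp only [Walk.support_cons, List.tail_cons, List.filterMap_cons, getLeft?_inr]
    rw [← p.cons_tail_support, ← w.cons_tail_support, hsupp]
    simp only [List.filterMap_cons, getLeft?_inl]

lemma Walk.exists_bipartiteOfRel_lift (F : (leftProjection r).Dart → β)
    (hF : ∀ d, r d.fst (F d) ∧ r d.snd (F d)) {a a' : α} :
    ∀ p : (leftProjection r).Walk a a',
      ∃ w : (bipartiteOfRel r).Walk (inl a) (inl a'), w.length = 2 * p.length ∧
        w.support.tail.filterMap getLeft? = p.support.tail ∧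
        w.support.tail.filterMap getRight? = p.darts.map F
  | .nil => ⟨.nil, rfl, rfl, rfl⟩
  | .cons (v := a'') h p => by
    obtain ⟨w, hlen, hleft, hright⟩ := exists_bipartiteOfRel_lift F hF p
    let d : (leftProjection r).Dart := ⟨(a, a''), h⟩
    have h₁ : (bipartiteOfRel r).Adj (inl a) (inr (F d)) := (hF d).1
    have h₂ : (bipartiteOfRel r).Adj (inr (F d)) (inl a'') := (hF d).2
    refine ⟨.cons h₁ (.cons h₂ w), by simp only [Walk.length_cons]; omega, ?_, ?_⟩
    all_goals
      simp only [Walk.support_cons, List.tail_cons, List.filterMap_cons, getLeft?_inr,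
        getRight?_inr, Walk.darts_cons, List.map_cons]
      rw [← w.cons_tail_support]
    · rw [← p.cons_tail_support, List.filterMap_cons, getLeft?_inl, hleft]
    · rw [List.filterMap_cons, getRight?_inl, hright]

lemma Walk.IsCycle.exists_leftProjection {a : α} {c : (bipartiteOfRel r).Walk (inl a) (inl a)}
    (hc : c.IsCycle) (hlen : 4 < c.length) :
    ∃ p : (leftProjection r).Walk a a, p.IsCycle ∧ 2 * p.length = c.length := by
  obtain ⟨p, hplen, hsupp⟩ := c.exists_leftProjection_of_isTrail hc.isTrail
  refine ⟨p, p.isCycle_of_support_tail_nodup (by omega) ?_, hplen⟩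
  rw [hsupp]
  exact hc.support_nodup.filterMap fun _ _ _ h h' =>
    (getLeft?_eq_some_iff.mp h).trans (getLeft?_eq_some_iff.mp h').symm

lemma Walk.IsCycle.exists_bipartiteOfRel (hP : (leftProjection r).CliqueFree 3) {a : α}
    {p : (leftProjection r).Walk a a} (hp : p.IsCycle) :
    ∃ c : (bipartiteOfRel r).Walk (inl a) (inl a), c.IsCycle ∧ c.length = 2 * p.length := by
  choose F hF using fun d : (leftProjection r).Dart => d.adj.2
  obtain ⟨c, hlen, hleft, hright⟩ := p.exists_bipartiteOfRel_lift F hF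
  have hF_nodup : (p.darts.map F).Nodup := by
    refine hp.edges_nodup.of_map _ |>.map_on fun d₁ h₁ d₂ h₂ hF₁₂ => ?_
    refine List.inj_on_of_nodup_map hp.edges_nodup h₁ h₂ ?_
    exact leftProjection_dart_edge_eq_of_rel hP (hF d₁).1 (hF d₁).2 (hF₁₂ ▸ (hF d₂).1)
      (hF₁₂ ▸ (hF d₂).2)
  refine ⟨c, c.isCycle_of_support_tail_nodup (by have := hp.three_le_length; omega) ?_, hlen⟩
  exact List.nodup_of_filterMap_getLeft?_getRight? (hleft ▸ hp.support_nodup) (hright ▸ hF_nodup)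

lemma Walk.IsCycle.exists_isCycle_inl {v : α ⊕ β} {c : (bipartiteOfRel r).Walk v v}
    (hc : c.IsCycle) : ∃ (a : α) (c' : (bipartiteOfRel r).Walk (inl a) (inl a)),
      c'.IsCycle ∧ c'.length = c.length := by
  classical
  cases c with
  | nil => exact absurd hc Walk.not_isCycle_nil
  | @cons _ u _ h c =>
    rcases v with a | _
    · exact ⟨a, _, hc, rfl⟩
    rcases u with a | _
    · exact ⟨a, _, hc.rotate (by simp), Walk.length_rotate ..⟩
    · exact h.elim

theorem girth_leftProjection (h : (longCycleLengths (bipartiteOfRel r)).Nonempty) :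
    (leftProjection r).girth = 3 ∨
      (leftProjection r).girth = sInf (longCycleLengths (bipartiteOfRel r)) / 2 := by
  obtain ⟨_, c₀, hc₀, hc₀_len, hg⟩ := Nat.sInf_mem h
  obtain ⟨a, c, hc, hc_len⟩ := hc₀.exists_isCycle_inl
  obtain ⟨p, hp, hp_len⟩ := hc.exists_leftProjection (by omega)
  have hle := girth_le_length hp
  refine or_iff_not_imp_left.mpr fun h3 => ?_
  have hfree : (leftProjection r).CliqueFree 3 := fun _ hs => h3 (girth_eq_three_of_isNClique hs)
  obtain ⟨_, q, hq, hq_len⟩ := exists_girth_eq_length.mpr fun hacyc => hacyc p hp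
  obtain ⟨c', hc', hc'_len⟩ := hq.exists_bipartiteOfRel hfree
  have := Nat.sInf_le (s := longCycleLengths (bipartiteOfRel r))
    ⟨_, c', hc', by have := hq.three_le_length; omega, rfl⟩
  omega

end Projection

end SimpleGraph

def primeDvd (X : Set ℕ) (p : ↥(rho X)) (x : ↥(Xstar X)) : Prop := (p : ℕ) ∣ x

lemma bGraph_eq_bipartiteOfRel (X : Set ℕ) : BGraph X = bipartiteOfRel (primeDvd X) := by
  ext (p | x) (q | y) <;> rfl

lemma deltaGraph_eq_leftProjection (X : Set ℕ) :
    DeltaGraph X = leftProjection (primeDvd X) := by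
  ext p q
  refine and_congr_right fun hpq => ⟨fun ⟨x, hx, hdvd⟩ => ?_, fun ⟨x, hp, hq⟩ => ?_⟩
  · have hp : (p : ℕ) ∣ x := (dvd_mul_right _ _).trans hdvd
    have hx1 : x ≠ 1 := fun h => p.2.1.ne_one (Nat.dvd_one.mp (h ▸ hp))
    exact ⟨⟨x, hx, hx1⟩, hp, (dvd_mul_left _ _).trans hdvd⟩
  · have hcop : Nat.Coprime p q :=
      (Nat.coprime_primes p.2.1 q.2.1).mpr (Subtype.coe_ne_coe.mpr hpq)
    exact ⟨x, x.2.1, hcop.mul_dvd_of_dvd_of_dvd hp hq⟩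

lemma gammaGraph_eq_leftProjection (X : Set ℕ) :
    GammaGraph X = leftProjection (flip (primeDvd X)) := by
  ext x y
  refine and_congr_right fun hxy => ?_
  have hgcd : Nat.gcd x y ≠ 0 := fun h =>
    hxy (Subtype.ext ((Nat.gcd_eq_zero_iff.mp h).1.trans (Nat.gcd_eq_zero_iff.mp h).2.symm))
  constructor
  · intro h
    obtain ⟨p, hp, hpx, hpy⟩ := Nat.Prime.not_coprime_iff_dvd.mp (Nat.ne_of_gt h)
    exact ⟨⟨p, hp, x, x.2.1, hpx⟩, hpx, hpy⟩
  · rintro ⟨p, hpx, hpy⟩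
    exact p.2.1.one_lt.trans_le (Nat.le_of_dvd (Nat.pos_of_ne_zero hgcd) (Nat.dvd_gcd hpx hpy))

theorem stmt_7_general (X : Set ℕ)
    (hcyc : ∃ (v : ↥(rho X) ⊕ ↥(Xstar X)) (w : (BGraph X).Walk v v),
      w.IsCycle ∧ 4 < w.length)
    (g' : ℕ)
    (hg' : g' = sInf {n : ℕ | ∃ (v : ↥(rho X) ⊕ ↥(Xstar X)) (w : (BGraph X).Walk v v),
      w.IsCycle ∧ 4 < w.length ∧ w.length = n}) :
    ((DeltaGraph X).girth = 3 ∨ (DeltaGraph X).girth = g' / 2) ∧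
    ((GammaGraph X).girth = 3 ∨ (GammaGraph X).girth = g' / 2) := by
  rw [bGraph_eq_bipartiteOfRel] at hcyc hg'
  obtain ⟨v, w, hw, hlen⟩ := hcyc
  have hB : (longCycleLengths (bipartiteOfRel (primeDvd X))).Nonempty := ⟨_, v, w, hw, hlen, rfl⟩
  change g' = sInf (longCycleLengths _) at hg'
  rw [deltaGraph_eq_leftProjection, gammaGraph_eq_leftProjection, hg']
  refine ⟨girth_leftProjection hB, ?_⟩
  rw [(bipartiteOfRelIsoFlip _).longCycleLengths_eq] at hB ⊢
  exact girth_leftProjection hB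

theorem stmt_7 (X : Set ℕ) (hne : X.Nonempty) (hpos : ∀ x ∈ X, 0 < x)
    (hX1 : X ≠ {1})
    (hcyc : ∃ (v : ↥(rho X) ⊕ ↥(Xstar X)) (w : (BGraph X).Walk v v),
      w.IsCycle ∧ 4 < w.length)
    (g' : ℕ)
    (hg' : g' = sInf {n : ℕ | ∃ (v : ↥(rho X) ⊕ ↥(Xstar X)) (w : (BGraph X).Walk v v),
      w.IsCycle ∧ 4 < w.length ∧ w.length = n}) :
    ((DeltaGraph X).girth = 3 ∨ (DeltaGraph X).girth = g' / 2) ∧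
    ((GammaGraph X).girth = 3 ∨ (GammaGraph X).girth = g' / 2) :=
  stmt_7_general X hcyc g' hg'
end

section
/- For every subset K of the three-element set {B, Δ, Γ} there exists a nonempty set X of positive integers with X ≠ {1} such that, among the three graphs B(X), Δ(X), Γ(X), exactly those labelled by elements of K are acyclic and the remaining ones contain a cycle. -/
/-!
Each of the eight patterns is realised by a small explicit set:
`{2}, {2,4,8}, {30}, {2,4,30}, {6,12}, {2,6,12}, {30,60}, {2,30,60}`.
Cycles are triangles or squares: in `Δ(X)` three primes dividing one element, in `Γ(X)` three
pairwise non-coprime elements, and in `B(X)` the square `p – x – q – y` for two elements `x, y`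
both divisible by two primes `p, q`. For acyclicity, `Δ(X)` and `Γ(X)` have at most two
vertices in the examples, while `B(X)` is a forest as soon as all elements of `X*` but one are
prime powers: ordering the vertices by a height function, every vertex has at most one lower
neighbour, which rules out cycles.
-/

open SimpleGraph

namespace SimpleGraph

variable {V : Type*} {G : SimpleGraph V}

-- A highest vertex of a cycle would have two distinct lower neighbours on it.
theorem IsAcyclic.of_unique_lower_neighbor (h : V → ℕ) (hne : ∀ ⦃u v⦄, G.Adj u v → h u ≠ h v)
    (hlower : ∀ ⦃u v w⦄, G.Adj u v → G.Adj u w → h v < h u → h w < h u → v = w) :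
    G.IsAcyclic := by
  classical
  intro v c hc
  obtain ⟨u, hu, hmax⟩ := c.support.toFinset.exists_max_image h ⟨v, by simp⟩
  rw [List.mem_toFinset] at hu
  set c' := c.rotate u hu
  have hc' : c'.IsCycle := hc.rotate hu
  have lower {w : V} (hw : w ∈ c'.support) (huw : G.Adj u w) : h w < h u :=
    (hmax w (by simpa [c'] using hw)).lt_of_ne (hne huw).symm
  have hsnd := c'.adj_snd hc'.not_nil
  have hpen := (c'.adj_penultimate hc'.not_nil).symm
  exact hc'.snd_ne_penultimate <| hlower hsnd hpen
    (lower (c'.getVert_mem_support _) hsnd) (lower (c'.getVert_mem_support _) hpen)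

theorem not_isAcyclic_of_triangle {a b c : V} (hab : G.Adj a b) (hac : G.Adj a c)
    (hbc : G.Adj b c) : ¬ G.IsAcyclic := by
  classical
  exact fun hG => hG.cliqueFree le_rfl {a, b, c} (is3Clique_triple_iff.mpr ⟨hab, hac, hbc⟩)

theorem not_isAcyclic_of_square {a b c d : V} (hab : G.Adj a b) (hbc : G.Adj b c)
    (had : G.Adj a d) (hdc : G.Adj d c) (hac : a ≠ c) (hbd : b ≠ d) : ¬ G.IsAcyclic := by
  intro hG
  have isPath {x : V} (hax : G.Adj a x) (hxc : G.Adj x c) :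
      (Walk.cons hax (Walk.cons hxc Walk.nil)).IsPath := by
    simp [hax.ne, hxc.ne, hac]
  have := (hG.subsingleton_path a c).elim ⟨_, isPath hab hbc⟩ ⟨_, isPath had hdc⟩
  exact hbd (Walk.cons.inj (congrArg Subtype.val this)).1

end SimpleGraph

section

variable {X : Set ℕ}

-- Heights: `m` at 0, primes at 1, other elements at 2. A prime's only lower neighbour is `m`,
-- and a prime power's only lower neighbour is its prime.
theorem BGraph_isAcyclic_of_isPrimePow (m : ℕ) (hX : ∀ x ∈ Xstar X, x ≠ m → IsPrimePow x) :
    (BGraph X).IsAcyclic := by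
  refine IsAcyclic.of_unique_lower_neighbor
    (Sum.elim (fun _ => 1) fun x => if (x : ℕ) = m then 0 else 2) ?_ ?_
  · rintro (p | x) (q | y) h
    all_goals first | exact h.elim | (simp only [Sum.elim_inl, Sum.elim_inr]; split <;> omega)
  · rintro (p | x) (q | y) (r | z) hq hr hlt hlt'
    all_goals first | exact hq.elim | exact hr.elim | skip
    · have hy : (y : ℕ) = m := by by_contra h; simp [h] at hlt
      have hz : (z : ℕ) = m := by by_contra h; simp [h] at hlt'
      exact congrArg Sum.inr (Subtype.ext (hy.trans hz.symm))
    · have hx : (x : ℕ) ≠ m := by rintro h; simp [h] at hlt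
      obtain ⟨p, -, hp⟩ := isPrimePow_iff_unique_prime_dvd.mp (hX x x.2 hx)
      exact congrArg Sum.inl (Subtype.ext ((hp q ⟨q.2.1, hq⟩).trans (hp r ⟨r.2.1, hr⟩).symm))

theorem DeltaGraph_isAcyclic_of_dvd (n : ℕ) (hn : n ≠ 0) (hX : ∀ x ∈ X, x ∣ n)
    (hcard : n.primeFactors.card ≤ 2) : (DeltaGraph X).IsAcyclic := by
  refine IsAcyclic.of_card_le_two ?_
  have hsub : rho X ⊆ n.primeFactors := fun p ⟨hp, x, hx, hpx⟩ =>
    Nat.mem_primeFactors.mpr ⟨hp, hpx.trans (hX x hx), hn⟩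
  calc ENat.card (rho X) = (rho X).encard := ENat.card_coe_set_eq _
    _ ≤ (n.primeFactors : Set ℕ).encard := Set.encard_le_encard hsub
    _ ≤ 2 := by rw [Set.encard_coe_eq_coe_finsetCard]; exact_mod_cast hcard

theorem GammaGraph_isAcyclic_of_subset_pair (a b : ℕ) (hX : X ⊆ {a, b}) :
    (GammaGraph X).IsAcyclic := by
  refine IsAcyclic.of_card_le_two ?_
  calc ENat.card (Xstar X) = (Xstar X).encard := ENat.card_coe_set_eq _
    _ ≤ ({a, b} : Set ℕ).encard := Set.encard_le_encard (Set.sdiff_subset.trans hX)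
    _ ≤ 2 := (Set.encard_insert_le _ _).trans (by simp [one_add_one_eq_two])

theorem mem_Xstar_of_dvd {p x : ℕ} (hp : p.Prime) (hx : x ∈ X) (hpx : p ∣ x) : x ∈ Xstar X :=
  ⟨hx, fun h : x = 1 => hp.ne_one (Nat.dvd_one.mp (h ▸ hpx))⟩

theorem BGraph_not_isAcyclic (p q x y : ℕ) (hp : p.Prime := by norm_num)
    (hq : q.Prime := by norm_num) (hpq : p ≠ q := by norm_num) (hx : x ∈ X := by norm_num)
    (hy : y ∈ X := by norm_num) (hxy : x ≠ y := by norm_num) (hpqx : p * q ∣ x := by norm_num)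
    (hpqy : p * q ∣ y := by norm_num) : ¬ (BGraph X).IsAcyclic := by
  have hpx := dvd_of_mul_right_dvd hpqx
  have hqx := dvd_of_mul_left_dvd hpqx
  have hpy := dvd_of_mul_right_dvd hpqy
  have hqy := dvd_of_mul_left_dvd hpqy
  exact not_isAcyclic_of_square (G := BGraph X) (a := .inl ⟨p, hp, x, hx, hpx⟩)
    (b := .inr ⟨x, mem_Xstar_of_dvd hp hx hpx⟩) (c := .inl ⟨q, hq, x, hx, hqx⟩)
    (d := .inr ⟨y, mem_Xstar_of_dvd hp hy hpy⟩) hpx hqx hpy hqy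
    (Sum.inl_injective.ne (Subtype.coe_ne_coe.mp hpq))
    (Sum.inr_injective.ne (Subtype.coe_ne_coe.mp hxy))

theorem DeltaGraph_not_isAcyclic (p q r x : ℕ) (hp : p.Prime := by norm_num)
    (hq : q.Prime := by norm_num) (hr : r.Prime := by norm_num) (hpq : p ≠ q := by norm_num)
    (hpr : p ≠ r := by norm_num) (hqr : q ≠ r := by norm_num) (hx : x ∈ X := by norm_num)
    (hpqr : p * q * r ∣ x := by norm_num) : ¬ (DeltaGraph X).IsAcyclic := by
  have hpq_x : p * q ∣ x := (Dvd.intro r rfl).trans hpqr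
  have hpr_x : p * r ∣ x := (Dvd.intro q (by ring)).trans hpqr
  have hqr_x : q * r ∣ x := (Dvd.intro p (by ring)).trans hpqr
  exact not_isAcyclic_of_triangle (G := DeltaGraph X)
    (a := ⟨p, hp, x, hx, dvd_of_mul_right_dvd hpq_x⟩)
    (b := ⟨q, hq, x, hx, dvd_of_mul_left_dvd hpq_x⟩)
    (c := ⟨r, hr, x, hx, dvd_of_mul_left_dvd hpr_x⟩)
    ⟨Subtype.coe_ne_coe.mp hpq, x, hx, hpq_x⟩ ⟨Subtype.coe_ne_coe.mp hpr, x, hx, hpr_x⟩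
    ⟨Subtype.coe_ne_coe.mp hqr, x, hx, hqr_x⟩

theorem GammaGraph_not_isAcyclic (x y z : ℕ) (hx : x ∈ X := by norm_num)
    (hy : y ∈ X := by norm_num) (hz : z ∈ X := by norm_num) (hxy : x ≠ y := by norm_num)
    (hxz : x ≠ z := by norm_num) (hyz : y ≠ z := by norm_num)
    (gxy : 1 < x.gcd y := by norm_num) (gxz : 1 < x.gcd z := by norm_num)
    (gyz : 1 < y.gcd z := by norm_num) : ¬ (GammaGraph X).IsAcyclic := by
  have ne_one {a b : ℕ} (h : 1 < a.gcd b) : a ≠ 1 := by rintro rfl; simp at h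
  exact not_isAcyclic_of_triangle (G := GammaGraph X) (a := ⟨x, hx, ne_one gxy⟩)
    (b := ⟨y, hy, ne_one (Nat.gcd_comm x y ▸ gxy)⟩)
    (c := ⟨z, hz, ne_one (Nat.gcd_comm x z ▸ gxz)⟩)
    ⟨Subtype.coe_ne_coe.mp hxy, gxy⟩ ⟨Subtype.coe_ne_coe.mp hxz, gxz⟩
    ⟨Subtype.coe_ne_coe.mp hyz, gyz⟩

end

theorem stmt_8 (bB bD bG : Bool) :
    ∃ X : Set ℕ, X.Nonempty ∧ (∀ x ∈ X, 0 < x) ∧ X ≠ {1} ∧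
      ((BGraph X).IsAcyclic ↔ bB = true) ∧
      ((DeltaGraph X).IsAcyclic ↔ bD = true) ∧
      ((GammaGraph X).IsAcyclic ↔ bG = true) := by
  cases bB <;> cases bD <;> cases bG <;> simp only [Bool.false_eq_true, iff_false, iff_true]
  case' false.false.false => refine ⟨{2, 30, 60}, ?_, ?_, ?_, BGraph_not_isAcyclic 2 3 30 60,
    DeltaGraph_not_isAcyclic 2 3 5 30, GammaGraph_not_isAcyclic 2 30 60⟩
  case' false.false.true => refine ⟨{30, 60}, ?_, ?_, ?_, BGraph_not_isAcyclic 2 3 30 60,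
    DeltaGraph_not_isAcyclic 2 3 5 30, GammaGraph_isAcyclic_of_subset_pair 30 60 ?_⟩
  case' false.true.false => refine ⟨{2, 6, 12}, ?_, ?_, ?_, BGraph_not_isAcyclic 2 3 6 12,
    DeltaGraph_isAcyclic_of_dvd 12 ?_ ?_ ?_, GammaGraph_not_isAcyclic 2 6 12⟩
  case' false.true.true => refine ⟨{6, 12}, ?_, ?_, ?_, BGraph_not_isAcyclic 2 3 6 12,
    DeltaGraph_isAcyclic_of_dvd 12 ?_ ?_ ?_, GammaGraph_isAcyclic_of_subset_pair 6 12 ?_⟩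
  case' true.false.false => refine ⟨{2, 4, 30}, ?_, ?_, ?_,
    BGraph_isAcyclic_of_isPrimePow 30 ?_, DeltaGraph_not_isAcyclic 2 3 5 30,
    GammaGraph_not_isAcyclic 2 4 30⟩
  case' true.false.true => refine ⟨{30}, ?_, ?_, ?_, BGraph_isAcyclic_of_isPrimePow 30 ?_,
    DeltaGraph_not_isAcyclic 2 3 5 30, GammaGraph_isAcyclic_of_subset_pair 30 30 ?_⟩
  case' true.true.false => refine ⟨{2, 4, 8}, ?_, ?_, ?_, BGraph_isAcyclic_of_isPrimePow 2 ?_,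
    DeltaGraph_isAcyclic_of_dvd 8 ?_ ?_ ?_, GammaGraph_not_isAcyclic 2 4 8⟩
  case' true.true.true => refine ⟨{2}, ?_, ?_, ?_, BGraph_isAcyclic_of_isPrimePow 2 ?_,
    DeltaGraph_isAcyclic_of_dvd 2 ?_ ?_ ?_, GammaGraph_isAcyclic_of_subset_pair 2 2 ?_⟩
  all_goals simp +decide [Set.eq_singleton_iff_unique_mem, Xstar, Nat.primeFactors,
    Nat.primeFactorsList_ofNat]
end

section
/- Let ℓ ≥ 2. The graph B(X) contains a subgraph isomorphic to Inc(K_ℓ) if and only if one of the following holds: (i) Γ(X) contains a complete subgraph K_ℓ with vertices x_1, …, x_ℓ ∈ X*, and there exist (ℓ choose 2) pairwise distinct primes p_{ij}, for 1 ≤ i < j ≤ ℓ, such that p_{ij} divides gcd(x_i, x_j); or (ii) Δ(X) contains a complete subgraph K_ℓ with vertices p_1, …, p_ℓ ∈ ρ(X), and there exist (ℓ choose 2) pairwise distinct elements x_{ij} ∈ X*, for 1 ≤ i < j ≤ ℓ, such that p_i·p_j divides x_{ij}. -/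
open SimpleGraph

/-- The incidence graph of a graph `G`: the bipartite graph on `V ⊔ E(G)` in which
a vertex `v` and an edge `e` are adjacent iff `v` is an endpoint of `e`. -/
def IncGraph {V : Type*} (G : SimpleGraph V) : SimpleGraph (V ⊕ ↥G.edgeSet) where
  Adj u w :=
    match u, w with
    | Sum.inl v, Sum.inr e => v ∈ (e : Sym2 V)
    | Sum.inr e, Sum.inl v => v ∈ (e : Sym2 V)
    | _, _ => False
  symm := ⟨by rintro (v | e) (v' | e') h <;> exact h⟩
  loopless := ⟨by rintro (v | e) h <;> exact h⟩

/-- `G` contains a subgraph isomorphic to `H`: an injective map from the vertices of `H`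
to the vertices of `G` carrying edges of `H` to edges of `G`. -/
def ContainsSub {V W : Type*} (G : SimpleGraph V) (H : SimpleGraph W) : Prop :=
  ∃ f : W → V, Function.Injective f ∧ ∀ u v, H.Adj u v → G.Adj (f u) (f v)

/-!
An injective homomorphism from `Inc(K_ℓ)` into a bipartite graph sends all vertex-nodes of
`Inc(K_ℓ)` into one side (two vertices of `K_ℓ` share the node of the edge joining them) and all
edge-nodes into the other. If the vertices of `K_ℓ` land on elements `x_i ∈ X*`, the edges land on
distinct primes dividing both endpoints, i.e. dividing `gcd(x_i, x_j)`; if they land on primes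
`p_i`, the edges land on distinct elements of `X*` divisible by both endpoints, i.e. by
`p_i p_j`. An injective labelling of the edges of `K_ℓ` is the same as a family indexed by the
pairs `i < j` with pairwise distinct values.
-/

open Function

theorem exists_injective_subtype_iff {ι β : Type*} {S : Set β} (D : ι → β → Prop) :
    (∃ g : ι → S, Injective g ∧ ∀ i, D i (g i)) ↔
      ∃ g : ι → β, Injective g ∧ ∀ i, g i ∈ S ∧ D i (g i) :=
  ⟨fun ⟨g, hg, hD⟩ => ⟨fun i => g i, Subtype.coe_injective.comp hg, fun i => ⟨(g i).2, hD i⟩⟩,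
    fun ⟨g, hg, hD⟩ => ⟨fun i => ⟨g i, (hD i).1⟩, fun _ _ h => hg (congrArg Subtype.val h),
      fun i => (hD i).2⟩⟩

namespace Sym2

variable {α : Type*} [LinearOrder α]

theorem mk_ne_mk_of_lt {i j i' j' : α} (h : i < j) (h' : i' < j')
    (hne : (i, j) ≠ (i', j')) : s(i, j) ≠ s(i', j') := by
  rw [Ne, Sym2.eq_iff]
  rintro (⟨rfl, rfl⟩ | ⟨rfl, rfl⟩)
  exacts [hne rfl, lt_asymm h h']

theorem inf_lt_sup_of_not_isDiag {e : Sym2 α} (he : ¬e.IsDiag) : e.inf < e.sup := by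
  induction e with | _ a b
  exact inf_lt_sup.2 (Sym2.mk_isDiag_iff.not.1 he)

end Sym2

namespace SimpleGraph

variable {P Q V E : Type*}

def bipartiteOf (r : P → Q → Prop) : SimpleGraph (P ⊕ Q) where
  Adj
    | .inl p, .inr q => r p q
    | .inr q, .inl p => r p q
    | _, _ => False
  symm := ⟨by rintro (p | q) (p' | q') h <;> exact h⟩
  loopless := ⟨by rintro (p | q) h <;> exact h⟩

section bipartiteOf

variable {r : P → Q → Prop}

theorem isLeft_eq_not_isLeft_of_bipartiteOf_adj {x y : P ⊕ Q} (h : (bipartiteOf r).Adj x y) :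
    x.isLeft = !y.isLeft := by
  rcases x with p | q <;> rcases y with p' | q' <;> first | rfl | exact h.elim

theorem bipartiteOf_flip_adj_swap {x y : P ⊕ Q} :
    (bipartiteOf (flip r)).Adj x.swap y.swap ↔ (bipartiteOf r).Adj x y := by
  rcases x with p | q <;> rcases y with p' | q' <;> rfl

variable {s : V → E → Prop}

theorem containsSub_bipartiteOf_of_injective {a : V → P} (ha : Injective a) {b : E → Q}
    (hb : Injective b) (hab : ∀ e v, s v e → r (a v) (b e)) :
    ContainsSub (bipartiteOf r) (bipartiteOf s) := by
  refine ⟨Sum.map a b, Sum.map_injective.2 ⟨ha, hb⟩, ?_⟩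
  rintro (v | e) (v' | e') h
  exacts [h.elim, hab e' v h, hab e v' h, h.elim]

theorem exists_injective_of_forall_isLeft {f : V ⊕ E → P ⊕ Q} (hf : Injective f)
    (hadj : ∀ u w, (bipartiteOf s).Adj u w → (bipartiteOf r).Adj (f u) (f w))
    (hcover : ∀ e, ∃ v, s v e) (hleft : ∀ v, (f (.inl v)).isLeft) :
    ∃ a : V → P, Injective a ∧ ∃ b : E → Q, Injective b ∧ ∀ e v, s v e → r (a v) (b e) := by
  have hright (e : E) : (f (.inr e)).isRight := by
    obtain ⟨v, hv⟩ := hcover e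
    have h := isLeft_eq_not_isLeft_of_bipartiteOf_adj (hadj (.inl v) (.inr e) hv)
    rwa [hleft v, Sum.bnot_isLeft, eq_comm] at h
  choose a ha using fun v => Sum.isLeft_iff.1 (hleft v)
  choose b hb using fun e => Sum.isRight_iff.1 (hright e)
  refine ⟨a, fun v v' h => Sum.inl_injective (hf (by rw [ha, ha, h])),
    b, fun e e' h => Sum.inr_injective (hf (by rw [hb, hb, h])), fun e v hve => ?_⟩
  have h := hadj (.inl v) (.inr e) hve
  rwa [ha, hb] at h

theorem containsSub_bipartiteOf_iff (hconn : ∀ v v', v ≠ v' → ∃ e, s v e ∧ s v' e)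
    (hcover : ∀ e, ∃ v, s v e) :
    ContainsSub (bipartiteOf r) (bipartiteOf s) ↔
      (∃ a : V → P, Injective a ∧ ∃ b : E → Q, Injective b ∧ ∀ e v, s v e → r (a v) (b e)) ∨
      (∃ a : V → Q, Injective a ∧ ∃ b : E → P, Injective b ∧ ∀ e v, s v e → r (b e) (a v)) := by
  constructor
  · rintro ⟨f, hf, hadj⟩
    by_cases hleft : ∀ v, (f (.inl v)).isLeft
    · exact .inl (exists_injective_of_forall_isLeft hf hadj hcover hleft)
    -- Then some, hence every, vertex-node lands on the right, and `Sum.swap` reduces to the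
    -- first case.
    obtain ⟨v₀, hv₀⟩ := not_forall.1 hleft
    refine .inr (exists_injective_of_forall_isLeft (r := flip r) (f := Sum.swap ∘ f)
      (Sum.swap_leftInverse.injective.comp hf)
      (fun u w h => bipartiteOf_flip_adj_swap.2 (hadj u w h)) hcover fun v => ?_)
    rcases eq_or_ne v v₀ with rfl | hv
    · simpa using hv₀
    obtain ⟨e, hve, hv₀e⟩ := hconn v v₀ hv
    have h₁ := isLeft_eq_not_isLeft_of_bipartiteOf_adj (hadj (.inl v) (.inr e) hve)
    have h₂ := isLeft_eq_not_isLeft_of_bipartiteOf_adj (hadj (.inl v₀) (.inr e) hv₀e)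
    simp_all
  · rintro (⟨a, ha, b, hb, hab⟩ | ⟨a, ha, b, hb, hab⟩)
    · exact containsSub_bipartiteOf_of_injective ha hb hab
    · obtain ⟨f, hf, hadj⟩ := containsSub_bipartiteOf_of_injective (r := flip r) ha hb hab
      exact ⟨Sum.swap ∘ f, Sum.swap_leftInverse.injective.comp hf,
        fun u w h => bipartiteOf_flip_adj_swap.2 (hadj u w h)⟩

end bipartiteOf

section LinearOrder

variable {α β : Type*} [LinearOrder α]

theorem adj_of_forall_lt {V : Type*} (G : SimpleGraph V) {x : α → V}
    (h : ∀ i j, i < j → G.Adj (x i) (x j)) {i j : α} (hij : i ≠ j) : G.Adj (x i) (x j) :=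
  hij.lt_or_gt.elim (h i j) fun hji => (h j i hji).symm

theorem exists_injective_edgeSet_top_iff [Nonempty β] (D : Sym2 α → β → Prop) :
    (∃ g : (⊤ : SimpleGraph α).edgeSet → β, Injective g ∧ ∀ e, D e.1 (g e)) ↔
      ∃ p : α → α → β, (∀ i j, i < j → D s(i, j) (p i j)) ∧
        ∀ i j i' j', i < j → i' < j' → (i, j) ≠ (i', j') → p i j ≠ p i' j' := by
  constructor
  · rintro ⟨g, hg, hD⟩
    refine ⟨fun i j => if h : i < j then g ⟨s(i, j), h.ne⟩ else Classical.arbitrary β,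
      fun i j h => by simpa [h] using hD ⟨s(i, j), h.ne⟩, fun i j i' j' h h' hne => ?_⟩
    simpa [h, h'] using hg.ne (Subtype.coe_ne_coe.1 (Sym2.mk_ne_mk_of_lt h h' hne))
  · rintro ⟨p, hD, hp⟩
    have hlt (e : (⊤ : SimpleGraph α).edgeSet) : e.1.inf < e.1.sup :=
      Sym2.inf_lt_sup_of_not_isDiag (not_isDiag_of_mem_edgeSet _ e.2)
    refine ⟨fun e : (⊤ : SimpleGraph α).edgeSet => p e.1.inf e.1.sup, fun e e' he => ?_,
      fun e => ?_⟩
    · by_contra hne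
      refine hp _ _ _ _ (hlt e) (hlt e') (fun h => hne (Subtype.ext ?_)) he
      rw [Prod.mk.injEq] at h
      exact Sym2.inf_eq_inf_and_sup_eq_sup.1 h
    -- `Sym2.sortEquiv.left_inv e` is `s(e.inf, e.sup) = e`.
    · exact (Sym2.sortEquiv.left_inv e.1) ▸ hD _ _ (hlt e)

theorem exists_injective_edgeSet_top_subtype_iff [Nonempty β] {S : Set β}
    (D : Sym2 α → β → Prop) :
    (∃ g : (⊤ : SimpleGraph α).edgeSet → S, Injective g ∧ ∀ e, D e.1 (g e)) ↔
      ∃ p : α → α → β, (∀ i j, i < j → p i j ∈ S ∧ D s(i, j) (p i j)) ∧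
        ∀ i j i' j', i < j → i' < j' → (i, j) ≠ (i', j') → p i j ≠ p i' j' :=
  (exists_injective_subtype_iff fun e : (⊤ : SimpleGraph α).edgeSet => D e).trans
    (exists_injective_edgeSet_top_iff fun e n => n ∈ S ∧ D e n)

end LinearOrder

end SimpleGraph

theorem incGraph_eq_bipartiteOf {V : Type*} (G : SimpleGraph V) :
    IncGraph G = bipartiteOf fun v (e : G.edgeSet) => v ∈ (e : Sym2 V) := by
  ext (v | e) (v' | e') <;> rfl

theorem bGraph_eq_bipartiteOf (X : Set ℕ) :
    BGraph X = bipartiteOf fun (p : rho X) (x : Xstar X) => (p : ℕ) ∣ x := by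
  ext (p | x) (q | y) <;> rfl

theorem gammaGraph_adj_of_prime_dvd_gcd {X : Set ℕ} {x y : Xstar X} (hxy : x ≠ y) {p : ℕ}
    (hp : p.Prime) (hdvd : p ∣ Nat.gcd x y) : (GammaGraph X).Adj x y := by
  have hgcd : Nat.gcd x y ≠ 0 := fun h =>
    hxy (Subtype.ext ((Nat.gcd_eq_zero_iff.1 h).1.trans (Nat.gcd_eq_zero_iff.1 h).2.symm))
  exact ⟨hxy, hp.one_lt.trans_le (Nat.le_of_dvd (Nat.pos_of_ne_zero hgcd) hdvd)⟩

section LinearOrder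

variable {α : Type*} [LinearOrder α] {X : Set ℕ}

theorem exists_injective_edge_primes_iff {x : α → Xstar X} (hx : Injective x) :
    (∃ p : (⊤ : SimpleGraph α).edgeSet → rho X, Injective p ∧
        ∀ e : (⊤ : SimpleGraph α).edgeSet, ∀ v ∈ (e : Sym2 α), (p e : ℕ) ∣ x v) ↔
      (∀ i j, i ≠ j → (GammaGraph X).Adj (x i) (x j)) ∧
        ∃ p : α → α → ℕ,
          (∀ i j, i < j → (p i j).Prime ∧ p i j ∣ Nat.gcd (x i : ℕ) (x j : ℕ)) ∧
          (∀ i j i' j', i < j → i' < j' → (i, j) ≠ (i', j') → p i j ≠ p i' j') := by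
  have key (i j : α) (n : ℕ) :
      (n ∈ rho X ∧ ∀ v ∈ s(i, j), n ∣ x v) ↔ n.Prime ∧ n ∣ Nat.gcd (x i) (x j) := by
    simp only [Sym2.mem_iff, forall_eq_or_imp, forall_eq, Nat.dvd_gcd_iff]
    exact ⟨fun ⟨⟨hn, _⟩, hd⟩ => ⟨hn, hd⟩, fun ⟨hn, hd⟩ => ⟨⟨hn, x i, (x i).2.1, hd.1⟩, hd⟩⟩
  refine (exists_injective_edgeSet_top_subtype_iff fun e n => ∀ v ∈ e, n ∣ (x v : ℕ)).trans <|
    (exists_congr fun p : α → α → ℕ => and_congr_left' <| forall₂_congr fun i j =>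
      forall_congr' fun _ => key i j (p i j)).trans
    ⟨fun h => ⟨fun i j => (GammaGraph X).adj_of_forall_lt fun i j hij => ?_, h⟩, And.right⟩
  obtain ⟨p, hp, -⟩ := h
  exact gammaGraph_adj_of_prime_dvd_gcd (hx.ne hij.ne) (hp i j hij).1 (hp i j hij).2

theorem exists_injective_edge_multiples_iff {q : α → rho X} (hq : Injective q) :
    (∃ z : (⊤ : SimpleGraph α).edgeSet → Xstar X, Injective z ∧
        ∀ e : (⊤ : SimpleGraph α).edgeSet, ∀ v ∈ (e : Sym2 α), (q v : ℕ) ∣ z e) ↔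
      (∀ i j, i ≠ j → (DeltaGraph X).Adj (q i) (q j)) ∧
        ∃ z : α → α → ℕ,
          (∀ i j, i < j → z i j ∈ Xstar X ∧ (q i : ℕ) * (q j : ℕ) ∣ z i j) ∧
          (∀ i j i' j', i < j → i' < j' → (i, j) ≠ (i', j') → z i j ≠ z i' j') := by
  have key (i j : α) (hij : i < j) (n : ℕ) :
      (n ∈ Xstar X ∧ ∀ v ∈ s(i, j), (q v : ℕ) ∣ n) ↔ n ∈ Xstar X ∧ (q i : ℕ) * q j ∣ n := by
    simp only [Sym2.mem_iff, forall_eq_or_imp, forall_eq]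
    refine and_congr_right fun _ => ⟨fun ⟨hi, hj⟩ => ?_,
      fun h => ⟨(dvd_mul_right _ _).trans h, (dvd_mul_left _ _).trans h⟩⟩
    exact Nat.Prime.dvd_mul_of_dvd_ne (Subtype.coe_ne_coe.2 (hq.ne hij.ne)) (q i).2.1 (q j).2.1
      hi hj
  refine (exists_injective_edgeSet_top_subtype_iff fun e n => ∀ v ∈ e, (q v : ℕ) ∣ n).trans <|
    (exists_congr fun z : α → α → ℕ => and_congr_left' <| forall₂_congr fun i j =>
      forall_congr' fun hij => key i j hij (z i j)).trans
    ⟨fun h => ⟨fun i j => (DeltaGraph X).adj_of_forall_lt fun i j hij => ?_, h⟩, And.right⟩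
  obtain ⟨z, hz, -⟩ := h
  exact ⟨hq.ne hij.ne, z i j, (hz i j hij).1.1, (hz i j hij).2⟩

end LinearOrder

theorem stmt_12_general (X : Set ℕ) (ℓ : ℕ) :
    ContainsSub (BGraph X) (IncGraph (⊤ : SimpleGraph (Fin ℓ))) ↔
    ((∃ x : Fin ℓ → ↥(Xstar X), Function.Injective x ∧
        (∀ i j, i ≠ j → (GammaGraph X).Adj (x i) (x j)) ∧
        ∃ p : Fin ℓ → Fin ℓ → ℕ,
          (∀ i j, i < j → (p i j).Prime ∧ p i j ∣ Nat.gcd (x i : ℕ) (x j : ℕ)) ∧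
          (∀ i j i' j', i < j → i' < j' → (i, j) ≠ (i', j') → p i j ≠ p i' j')) ∨
     (∃ q : Fin ℓ → ↥(rho X), Function.Injective q ∧
        (∀ i j, i ≠ j → (DeltaGraph X).Adj (q i) (q j)) ∧
        ∃ z : Fin ℓ → Fin ℓ → ℕ,
          (∀ i j, i < j → z i j ∈ Xstar X ∧ (q i : ℕ) * (q j : ℕ) ∣ z i j) ∧
          (∀ i j i' j', i < j → i' < j' → (i, j) ≠ (i', j') → z i j ≠ z i' j'))) := by
  rw [bGraph_eq_bipartiteOf, incGraph_eq_bipartiteOf, or_comm,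
    containsSub_bipartiteOf_iff
      (fun v v' h => ⟨⟨s(v, v'), h⟩, Sym2.mem_mk_left _ _, Sym2.mem_mk_right _ _⟩)
      (fun e => ⟨_, Sym2.out_fst_mem e.1⟩)]
  exact or_congr
    (exists_congr fun q => and_congr_right fun hq => exists_injective_edge_multiples_iff hq)
    (exists_congr fun x => and_congr_right fun hx => exists_injective_edge_primes_iff hx)

theorem stmt_12 (X : Set ℕ) (hne : X.Nonempty) (hpos : ∀ x ∈ X, 0 < x)
    (hX1 : X ≠ {1}) (ℓ : ℕ) (hℓ : 2 ≤ ℓ) :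
    ContainsSub (BGraph X) (IncGraph (⊤ : SimpleGraph (Fin ℓ))) ↔
    ((∃ x : Fin ℓ → ↥(Xstar X), Function.Injective x ∧
        (∀ i j, i ≠ j → (GammaGraph X).Adj (x i) (x j)) ∧
        ∃ p : Fin ℓ → Fin ℓ → ℕ,
          (∀ i j, i < j → (p i j).Prime ∧ p i j ∣ Nat.gcd (x i : ℕ) (x j : ℕ)) ∧
          (∀ i j i' j', i < j → i' < j' → (i, j) ≠ (i', j') → p i j ≠ p i' j')) ∨
     (∃ q : Fin ℓ → ↥(rho X), Function.Injective q ∧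
        (∀ i j, i ≠ j → (DeltaGraph X).Adj (q i) (q j)) ∧
        ∃ z : Fin ℓ → Fin ℓ → ℕ,
          (∀ i j, i < j → z i j ∈ Xstar X ∧ (q i : ℕ) * (q j : ℕ) ∣ z i j) ∧
          (∀ i j i' j', i < j → i' < j' → (i, j) ≠ (i', j') → z i j ≠ z i' j'))) :=
  stmt_12_general X ℓ
end
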